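/- arXiv:2112.06472 — 3 statements merged into one kernel-verified Lean document; each statement's English description precedes it below -/
import Mathlib

section
/- For ν > -1/2 and μ ∈ ℝ, the integral ∫_{-1}^{1} e^{iμx}(1-x²)^{ν-1} dx equals √π · Γ(ν) · (2/μ)^{ν-1/2} · J_{ν-1/2}(μ), where J is the Bessel function of the first kind defined by its power series J_α(x) = Σ_{k≥0} (-1)^k / (k! Γ(α+k+1)) · (x/2)^{α+2k}. -/
open MeasureTheory Real Complex Finset
open scoped RealInnerProductSpace

noncomputable def besselJ (ν x : ℝ) : ℝ :=
  ∑' k : ℕ, (-1 : ℝ) ^ k / (k.factorial * Real.Gamma (ν + k + 1)) * (x / 2) ^ (ν + 2 * (k : ℝ))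

noncomputable def besselI (ν x : ℝ) : ℝ :=
  ∑' k : ℕ, (1 : ℝ) / (k.factorial * Real.Gamma (ν + k + 1)) * (x / 2) ^ (ν + 2 * (k : ℝ))

noncomputable def besselK (ν x : ℝ) : ℝ :=
  Real.pi * (besselI (-ν) x - besselI ν x) / (2 * Real.sin (ν * Real.pi))

noncomputable def poch (a : ℝ) (k : ℕ) : ℝ := ∏ i ∈ Finset.range k, (a + i)

noncomputable def hyp0F1 (c z : ℝ) : ℝ := ∑' k : ℕ, z ^ k / (poch c k * k.factorial)

noncomputable def hyp1F1 (a c z : ℝ) : ℝ :=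
  ∑' k : ℕ, poch a k / poch c k * z ^ k / k.factorial

noncomputable def sphereUniform (n : ℕ) : Measure (EuclideanSpace ℝ (Fin n)) :=
  (μH[(n : ℝ) - 1] (Metric.sphere (0 : EuclideanSpace ℝ (Fin n)) 1))⁻¹ •
    (μH[(n : ℝ) - 1]).restrict (Metric.sphere 0 1)


/-!
Expand `exp (i μ x)` in its power series and integrate term by term, which is legitimate because
the weight `(1 - x²) ^ (ν - 1)` is integrable and `|x| ≤ 1`: the integral becomes
`∑ (i μ) ^ n / n! * m n`, where `m n` are the moments of the weight. Odd moments vanish by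
symmetry; the substitution `u = x²` turns the even ones into Beta integrals,
`m (2k) = Γ(k + 1/2) Γ(ν) / Γ(k + 1/2 + ν)`, and the duplication formula
`Γ(k + 1/2) = (2k)! √π / (4^k k!)` turns the resulting series into that of
`(2 / μ) ^ (ν - 1/2) J_{ν - 1/2}(μ)`.
-/

open intervalIntegral
open scoped Nat

section Symmetry

variable {E : Type*} [NormedAddCommGroup E] {f : ℝ → E}

theorem IntervalIntegrable.neg_of_even (hf : ∀ x, f (-x) = f x) {a : ℝ}
    (h : IntervalIntegrable f volume 0 a) : IntervalIntegrable f volume (-a) 0 := by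
  simpa [hf] using ((IntervalIntegrable.iff_comp_neg).mp h).symm

variable [NormedSpace ℝ E]

theorem integral_eq_zero_of_odd (hf : ∀ x, f (-x) = -f x) (a : ℝ) :
    ∫ x in -a..a, f x = 0 := by
  have h := integral_comp_neg (a := -a) (b := a) f
  simp only [neg_neg, hf, intervalIntegral.integral_neg] at h
  rw [neg_eq_iff_add_eq_zero, ← two_smul ℝ] at h
  simpa using h

theorem integral_eq_two_smul_of_even (hf : ∀ x, f (-x) = f x) {a : ℝ}
    (h : IntervalIntegrable f volume 0 a) :
    ∫ x in -a..a, f x = (2 : ℝ) • ∫ x in 0..a, f x := by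
  have h_neg : ∫ x in -a..0, f x = ∫ x in 0..a, f x := by
    simpa [hf] using (integral_comp_neg (a := 0) (b := a) f).symm
  rw [← integral_add_adjacent_intervals (h.neg_of_even hf) h, h_neg, two_smul]

end Symmetry

theorem Real.integral_rpow_mul_one_sub_rpow {a b : ℝ} (ha : 0 < a) (hb : 0 < b) :
    ∫ x in (0 : ℝ)..1, x ^ (a - 1) * (1 - x) ^ (b - 1) =
      Real.Gamma a * Real.Gamma b / Real.Gamma (a + b) := by
  have h_beta : ((∫ x in (0 : ℝ)..1, x ^ (a - 1) * (1 - x) ^ (b - 1) : ℝ) : ℂ) =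
      betaIntegral a b := by
    rw [betaIntegral, ← intervalIntegral.integral_ofReal]
    refine integral_congr fun x hx => ?_
    rw [Set.uIcc_of_le zero_le_one] at hx
    simp only [Complex.ofReal_mul, Complex.ofReal_cpow hx.1,
      Complex.ofReal_cpow (sub_nonneg.2 hx.2)]
    push_cast
    ring_nf
  rw [← Complex.ofReal_inj, h_beta, betaIntegral_eq_Gamma_mul_div _ _ (by simpa) (by simpa)]
  push_cast [← Complex.Gamma_ofReal]
  rfl

theorem Real.Gamma_nat_add_half_eq_factorial (k : ℕ) :
    Real.Gamma (k + 1 / 2) = (2 * k)! * √π / (4 ^ k * k !) := by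
  have h := Real.Gamma_mul_Gamma_add_half (k + 1 / 2)
  rw [show (k : ℝ) + 1 / 2 + 1 / 2 = k + 1 by ring, show 2 * ((k : ℝ) + 1 / 2) = (2 * k : ℕ) + 1 by
    push_cast; ring, show (1 : ℝ) - ((2 * k : ℕ) + 1) = -(2 * k : ℕ) by ring,
    Real.Gamma_nat_eq_factorial, Real.Gamma_nat_eq_factorial, Real.rpow_neg zero_le_two,
    Real.rpow_natCast, pow_mul] at h
  rw [eq_div_iff (by positivity), mul_comm (4 ^ k : ℝ), ← mul_assoc, h,
    show (2 : ℝ) ^ 2 = 4 by norm_num]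
  field_simp

theorem intervalIntegrable_one_sub_sq_rpow {s : ℝ} (hs : -1 < s) :
    IntervalIntegrable (fun x : ℝ => (1 - x ^ 2) ^ s) volume 0 1 := by
  have h_left : IntervalIntegrable (fun x : ℝ => (1 - x) ^ s) volume 0 1 := by
    simpa using ((intervalIntegrable_rpow' (a := 0) (b := 1) hs).comp_sub_left 1).symm
  have h_right : ContinuousOn (fun x : ℝ => (1 + x) ^ s) (Set.uIcc 0 1) := by
    refine ContinuousOn.rpow_const (by fun_prop) fun x hx => Or.inl ?_
    rw [Set.uIcc_of_le zero_le_one] at hx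
    linarith [hx.1]
  refine (h_left.mul_continuousOn h_right).congr fun x hx => ?_
  rw [Set.uIoc_of_le zero_le_one] at hx
  rw [← Real.mul_rpow (by linarith [hx.2]) (by linarith [hx.1])]
  ring_nf

theorem integral_pow_mul_one_sub_sq_rpow {ν : ℝ} (hν : 0 < ν) (n : ℕ) :
    ∫ x in (0 : ℝ)..1, x ^ n * (1 - x ^ 2) ^ (ν - 1) =
      Real.Gamma ((n + 1) / 2) * Real.Gamma ν / (2 * Real.Gamma ((n + 1) / 2 + ν)) := by
  set g : ℝ → ℝ := fun u => u ^ ((n + 1) / 2 - 1 : ℝ) * (1 - u) ^ (ν - 1)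
  have h_subst := integral_comp_mul_deriv_of_deriv_nonneg (a := 0) (b := 1) (g := g)
    (f := fun x => x ^ 2) (by fun_prop) (fun x _ => by simpa using hasDerivAt_pow 2 x)
    (fun x hx => by
      rw [min_eq_left zero_le_one, max_eq_right zero_le_one] at hx
      linarith [hx.1])
  have h_pow : ∀ x : ℝ, 0 < x → (x ^ 2) ^ ((n + 1) / 2 - 1 : ℝ) * (2 * x) = 2 * x ^ n := by
    intro x hx
    rw [← Real.rpow_natCast x 2, ← Real.rpow_mul hx.le, ← Real.rpow_natCast x n,
      show ((2 : ℕ) : ℝ) * ((n + 1) / 2 - 1) = n - 1 by push_cast; ring,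
      Real.rpow_sub_one hx.ne']
    field_simp
  have h_lhs : ∫ x in (0 : ℝ)..1, (g ∘ fun x => x ^ 2) x * (2 * x) =
      2 * ∫ x in (0 : ℝ)..1, x ^ n * (1 - x ^ 2) ^ (ν - 1) := by
    rw [← intervalIntegral.integral_const_mul]
    refine integral_congr_ae (Filter.Eventually.of_forall fun x hx => ?_)
    rw [Set.uIoc_of_le zero_le_one] at hx
    simp only [g, Function.comp_apply]
    rw [mul_right_comm, h_pow x hx.1]
    ring
  rw [h_lhs, zero_pow two_ne_zero, one_pow,
    Real.integral_rpow_mul_one_sub_rpow (by positivity) hν] at h_subst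
  rw [mul_comm 2, ← div_div, ← h_subst, mul_div_cancel_left₀ _ two_ne_zero]

theorem integral_odd_pow_mul_one_sub_sq_rpow (ν : ℝ) (k : ℕ) :
    ∫ x in (-1 : ℝ)..1, x ^ (2 * k + 1) * (1 - x ^ 2) ^ (ν - 1) = 0 :=
  integral_eq_zero_of_odd (fun x => by rw [Odd.neg_pow (odd_two_mul_add_one k), neg_sq,
    neg_mul]) 1

theorem integral_even_pow_mul_one_sub_sq_rpow {ν : ℝ} (hν : 0 < ν) (k : ℕ) :
    ∫ x in (-1 : ℝ)..1, x ^ (2 * k) * (1 - x ^ 2) ^ (ν - 1) =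
      Real.Gamma (k + 1 / 2) * Real.Gamma ν / Real.Gamma (k + 1 / 2 + ν) := by
  have h_int : IntervalIntegrable (fun x : ℝ => x ^ (2 * k) * (1 - x ^ 2) ^ (ν - 1)) volume 0 1 :=
    (intervalIntegrable_one_sub_sq_rpow (by linarith)).continuousOn_mul (by fun_prop)
  rw [integral_eq_two_smul_of_even (fun x => by rw [Even.neg_pow (even_two_mul k), neg_sq]) h_int,
    integral_pow_mul_one_sub_sq_rpow hν, smul_eq_mul,
    show ((2 * k : ℕ) + 1) / 2 = (k : ℝ) + 1 / 2 by push_cast; ring]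
  field_simp

theorem integral_exp_mul_I_mul_eq_tsum {w : ℝ → ℝ} (hw : IntervalIntegrable w volume (-1) 1)
    (μ : ℝ) :
    ∫ x in (-1 : ℝ)..1, cexp (μ * x * I) * (w x : ℂ) =
      ∑' n : ℕ, (μ * I) ^ n / n ! * ((∫ x in (-1 : ℝ)..1, x ^ n * w x : ℝ) : ℂ) := by
  set F : ℕ → ℝ → ℂ := fun n x => (μ * I) ^ n / n ! * ((x ^ n * w x : ℝ) : ℂ)
  have h_exp : ∀ x : ℝ, cexp (μ * x * I) * (w x : ℂ) = ∑' n, F n x := by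
    intro x
    rw [Complex.exp_eq_exp_ℂ, NormedSpace.exp_eq_tsum_div, ← tsum_mul_right]
    congr 1 with n
    simp only [F]
    push_cast
    ring
  have h_int : ∀ n, Integrable (F n) (volume.restrict (Set.Ioc (-1) 1)) := fun n =>
    (hw.continuousOn_mul (continuous_pow n).continuousOn).1.ofReal.const_mul _
  have h_norm : ∀ n, ∫ x in Set.Ioc (-1 : ℝ) 1, ‖F n x‖ ≤
      |μ| ^ n / n ! * ∫ x in Set.Ioc (-1 : ℝ) 1, ‖w x‖ := by
    intro n
    rw [← MeasureTheory.integral_const_mul]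
    refine setIntegral_mono_on (h_int n).norm (hw.1.norm.const_mul _) measurableSet_Ioc
      fun x hx => ?_
    simp only [F, norm_mul, norm_div, norm_pow, Complex.norm_real, Complex.norm_I, mul_one,
      Complex.norm_natCast, Real.norm_eq_abs]
    gcongr
    exact mul_le_of_le_one_left (abs_nonneg _)
      (pow_le_one₀ (abs_nonneg x) (abs_le.mpr ⟨hx.1.le, hx.2⟩))
  have h_summable : Summable fun n => ∫ x in Set.Ioc (-1 : ℝ) 1, ‖F n x‖ :=
    .of_nonneg_of_le (fun n => integral_nonneg fun x => norm_nonneg _) h_norm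
      ((Real.summable_pow_div_factorial |μ|).mul_right _)
  rw [integral_of_le (by norm_num), integral_congr_ae (ae_of_all _ h_exp),
    ← integral_tsum_of_summable_integral_norm h_int h_summable]
  congr 1 with n
  rw [MeasureTheory.integral_const_mul, integral_complex_ofReal, integral_of_le (by norm_num)]

theorem tsum_two_mul_eq_tsum_of_odd_eq_zero {M : Type*} [AddCommMonoid M] [TopologicalSpace M]
    {f : ℕ → M} (hf : ∀ k, f (2 * k + 1) = 0) : ∑' k, f (2 * k) = ∑' n, f n := by
  refine (mul_right_injective₀ two_ne_zero).tsum_eq fun n hn => ?_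
  obtain ⟨k, rfl | rfl⟩ := Nat.even_or_odd' n
  · exact ⟨k, rfl⟩
  · exact absurd (hf k) hn

theorem rpow_mul_besselJ {x : ℝ} (hx : 0 < x) (α : ℝ) :
    (2 / x) ^ α * besselJ α x =
      ∑' k : ℕ, (-1) ^ k / (k ! * Real.Gamma (α + k + 1)) * (x / 2) ^ (2 * k) := by
  have h_cancel : (2 / x) ^ α * (x / 2) ^ α = 1 := by
    rw [← Real.mul_rpow (by positivity) (by positivity), div_mul_div_comm, mul_comm 2 x,
      div_self (by positivity), Real.one_rpow]
  rw [besselJ, ← tsum_mul_left]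
  congr 1 with k
  rw [Real.rpow_add (by positivity), ← Nat.cast_ofNat, ← Nat.cast_mul, Real.rpow_natCast]
  linear_combination (-1) ^ k / (k ! * Real.Gamma (α + k + 1)) * (x / 2) ^ (2 * k) * h_cancel

theorem stmt0 (ν μ : ℝ) (hν : 1 / 2 < ν) (hμ : 0 < μ) :
    (∫ x in (-1 : ℝ)..1, Complex.exp (μ * x * Complex.I) * ((1 - x ^ 2) ^ (ν - 1) : ℝ)) =
      ((Real.sqrt Real.pi * Real.Gamma ν * (2 / μ) ^ (ν - 1 / 2) *
        besselJ (ν - 1 / 2) μ : ℝ) : ℂ) := by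
  have hν₀ : 0 < ν := by linarith
  have h_weight : IntervalIntegrable (fun x : ℝ => (1 - x ^ 2) ^ (ν - 1)) volume (-1) 1 := by
    have h := intervalIntegrable_one_sub_sq_rpow (s := ν - 1) (by linarith)
    exact (h.neg_of_even fun x => by rw [neg_sq]).trans h
  rw [integral_exp_mul_I_mul_eq_tsum h_weight,
    ← tsum_two_mul_eq_tsum_of_odd_eq_zero fun k => by
      rw [integral_odd_pow_mul_one_sub_sq_rpow, Complex.ofReal_zero, mul_zero],
    mul_assoc, rpow_mul_besselJ hμ, ← tsum_mul_left, Complex.ofReal_tsum]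
  refine tsum_congr fun k => ?_
  rw [integral_even_pow_mul_one_sub_sq_rpow hν₀, Real.Gamma_nat_add_half_eq_factorial,
    show ν - 1 / 2 + k + 1 = k + 1 / 2 + ν by ring, pow_mul, mul_pow, I_sq,
    show ((μ : ℂ) ^ 2 * -1) ^ k = (((-μ ^ 2) ^ k : ℝ) : ℂ) by push_cast; ring,
    ← Complex.ofReal_natCast, ← Complex.ofReal_div, ← Complex.ofReal_mul, Complex.ofReal_inj,
    div_pow, pow_mul, pow_mul, neg_pow]
  field_simp
  norm_num
end

section
/- For μ + ν > -1, α > 0 and β > 0, ∫_0^∞ x^μ e^{-αx²} J_ν(βx) dx = (β^ν Γ((μ+ν+1)/2)) / (2^{ν+1} α^{(μ+ν+1)/2} Γ(ν+1)) · ₁F₁((μ+ν+1)/2; ν+1; -β²/(4α)). -/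
/-!
Expand `J_ν(βx)` in its power series and integrate term by term. The `k`-th term is a Gaussian
moment, `∫₀^∞ x^(μ+ν+2k) e^(-αx²) dx = Γ(s+k) / (2 α^(s+k))` with `s = (μ+ν+1)/2`, and
`Γ(s+k) / Γ(ν+1+k) = (s)_k Γ(s) / ((ν+1)_k Γ(ν+1))` turns the resulting series into `₁F₁`.
The absolute values of the terms form the same series with `-β²` replaced by `β²`, i.e. the `₁F₁`
series at `|z|`, which converges because `(a)_k / (c)_k` grows at most geometrically; this
justifies the interchange of sum and integral.
-/

open MeasureTheory Real Complex Finset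
open scoped RealInnerProductSpace

lemma Real.Gamma_add_nat_eq_poch_mul {a : ℝ} (ha : ∀ j : ℕ, a ≠ -j) :
    ∀ k : ℕ, Real.Gamma (a + k) = poch a k * Real.Gamma a
  | 0 => by simp [poch]
  | k + 1 => by
    have hak : a + k ≠ 0 := fun h => ha k (by linarith)
    rw [Nat.cast_succ, ← add_assoc, Real.Gamma_add_one hak, Real.Gamma_add_nat_eq_poch_mul ha k,
      poch, poch, Finset.prod_range_succ]
    ring

lemma poch_pos {a : ℝ} (ha : 0 < a) (k : ℕ) : 0 < poch a k :=
  Finset.prod_pos fun _ _ => by positivity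

lemma poch_div_poch_le_pow {a c : ℝ} (ha : 0 ≤ a) (hc : 0 < c) (k : ℕ) :
    poch a k / poch c k ≤ max 1 (a / c) ^ k := by
  rw [poch, poch, ← Finset.prod_div_distrib]
  calc ∏ i ∈ Finset.range k, (a + i) / (c + i) ≤ ∏ _i ∈ Finset.range k, max 1 (a / c) :=
        Finset.prod_le_prod (fun i _ => by positivity) fun i _ => ?_
    _ = max 1 (a / c) ^ k := by simp
  have hci : 0 < c + i := by positivity
  rw [div_le_iff₀ hci]
  rcases le_total a c with hac | hca
  · nlinarith [le_max_left 1 (a / c)]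
  · have : a / c * (c + i) ≥ a + i := by
      rw [mul_add, div_mul_cancel₀ a hc.ne']
      nlinarith [(le_div_iff₀ hc).mpr (by linarith : 1 * c ≤ a), Nat.cast_nonneg (α := ℝ) i]
    nlinarith [le_max_right 1 (a / c)]

noncomputable def hyp1F1Term (a c z : ℝ) (k : ℕ) : ℝ :=
  poch a k / poch c k * z ^ k / k.factorial

lemma summable_hyp1F1Term {a c : ℝ} (ha : 0 ≤ a) (hc : 0 < c) (z : ℝ) :
    Summable (hyp1F1Term a c z) := by
  refine Summable.of_norm_bounded (Real.summable_pow_div_factorial (max 1 (a / c) * |z|))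
    fun k => ?_
  have hpoch : 0 ≤ poch a k / poch c k :=
    div_nonneg (Finset.prod_nonneg fun _ _ => by positivity) (poch_pos hc k).le
  rw [hyp1F1Term, Real.norm_eq_abs, abs_div, abs_mul, abs_of_nonneg hpoch, abs_pow,
    Nat.abs_cast, mul_pow]
  gcongr
  exact poch_div_poch_le_pow ha hc k

section GaussianMoments

variable {μ q α b : ℝ}

lemma rpow_mul_exp_neg_mul_sq_mul_rpow_eqOn (hb : 0 ≤ b) :
    Set.EqOn (fun x : ℝ => x ^ μ * Real.exp (-α * x ^ 2) * (b * x) ^ q)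
      (fun x => b ^ q * (x ^ (μ + q) * Real.exp (-α * x ^ 2))) (Set.Ioi 0) := by
  intro x (hx : 0 < x)
  simp only
  rw [Real.mul_rpow hb hx.le, Real.rpow_add hx]
  ring

lemma integrableOn_rpow_mul_exp_neg_mul_sq_mul_rpow (hα : 0 < α) (hb : 0 ≤ b)
    (h : -1 < μ + q) :
    IntegrableOn (fun x : ℝ => x ^ μ * Real.exp (-α * x ^ 2) * (b * x) ^ q) (Set.Ioi 0) :=
  IntegrableOn.congr_fun ((integrableOn_rpow_mul_exp_neg_mul_sq hα h).const_mul _)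
    (rpow_mul_exp_neg_mul_sq_mul_rpow_eqOn hb).symm measurableSet_Ioi

lemma integral_rpow_mul_exp_neg_mul_sq_mul_rpow (hα : 0 < α) (hb : 0 ≤ b) (h : -1 < μ + q) :
    ∫ x in Set.Ioi (0 : ℝ), x ^ μ * Real.exp (-α * x ^ 2) * (b * x) ^ q =
      b ^ q * (α ^ (-(μ + q + 1) / 2) * (1 / 2) * Real.Gamma ((μ + q + 1) / 2)) := by
  rw [setIntegral_congr_fun measurableSet_Ioi (rpow_mul_exp_neg_mul_sq_mul_rpow_eqOn hb),
    integral_const_mul]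
  simp_rw [← Real.rpow_two]
  rw [integral_rpow_mul_exp_neg_mul_rpow two_pos h hα]

end GaussianMoments

/-- `w = -1` gives the terms of `besselJ`, `w = 1` those of `besselI`. -/
noncomputable def besselSeriesTerm (w ν : ℝ) (k : ℕ) (x : ℝ) : ℝ :=
  w ^ k / (k.factorial * Real.Gamma (ν + k + 1)) * (x / 2) ^ (ν + 2 * (k : ℝ))

section BesselSeries

variable {w μ ν α β x : ℝ}

lemma besselJ_eq_tsum_besselSeriesTerm (ν x : ℝ) :
    besselJ ν x = ∑' k, besselSeriesTerm (-1) ν k x := rfl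

lemma abs_besselSeriesTerm (hν : -1 < ν) (hx : 0 ≤ x) (k : ℕ) :
    |besselSeriesTerm w ν k x| = besselSeriesTerm |w| ν k x := by
  have hΓ : 0 < Real.Gamma (ν + k + 1) :=
    Real.Gamma_pos_of_pos (by linarith [(Nat.cast_nonneg k : (0 : ℝ) ≤ k)])
  rw [besselSeriesTerm, besselSeriesTerm, abs_mul, abs_div, abs_pow,
    abs_of_pos (by positivity : (0 : ℝ) < k.factorial * Real.Gamma (ν + k + 1)),
    abs_of_nonneg (Real.rpow_nonneg (div_nonneg hx zero_le_two) _)]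

lemma rpow_mul_exp_neg_mul_sq_mul_besselSeriesTerm (k : ℕ) :
    (fun x : ℝ => x ^ μ * Real.exp (-α * x ^ 2) * besselSeriesTerm w ν k (β * x)) =
      fun x => w ^ k / (k.factorial * Real.Gamma (ν + k + 1)) *
        (x ^ μ * Real.exp (-α * x ^ 2) * (β / 2 * x) ^ (ν + 2 * (k : ℝ))) := by
  funext x
  rw [besselSeriesTerm, show β * x / 2 = β / 2 * x by ring]
  ring

lemma integrableOn_rpow_mul_exp_neg_mul_sq_mul_besselSeriesTerm (hα : 0 < α) (hβ : 0 < β)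
    (h : -1 < μ + ν) (k : ℕ) :
    IntegrableOn (fun x : ℝ => x ^ μ * Real.exp (-α * x ^ 2) * besselSeriesTerm w ν k (β * x))
      (Set.Ioi 0) := by
  have hk : -1 < μ + (ν + 2 * (k : ℝ)) := by linarith [(by positivity : (0 : ℝ) ≤ 2 * k)]
  rw [rpow_mul_exp_neg_mul_sq_mul_besselSeriesTerm]
  exact (integrableOn_rpow_mul_exp_neg_mul_sq_mul_rpow hα (by positivity) hk).const_mul _

lemma integral_rpow_mul_exp_neg_mul_sq_mul_besselSeriesTerm (hα : 0 < α) (hβ : 0 < β)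
    (hν : -1 < ν) (h : -1 < μ + ν) (k : ℕ) :
    ∫ x in Set.Ioi (0 : ℝ), x ^ μ * Real.exp (-α * x ^ 2) * besselSeriesTerm w ν k (β * x) =
      β ^ ν * Real.Gamma ((μ + ν + 1) / 2) /
          (2 ^ (ν + 1) * α ^ ((μ + ν + 1) / 2) * Real.Gamma (ν + 1)) *
        hyp1F1Term ((μ + ν + 1) / 2) (ν + 1) (w * β ^ 2 / (4 * α)) k := by
  set s := (μ + ν + 1) / 2 with hs
  have hk : -1 < μ + (ν + 2 * (k : ℝ)) := by linarith [(by positivity : (0 : ℝ) ≤ 2 * k)]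
  rw [rpow_mul_exp_neg_mul_sq_mul_besselSeriesTerm, integral_const_mul,
    integral_rpow_mul_exp_neg_mul_sq_mul_rpow hα (by positivity) hk,
    show (μ + (ν + 2 * (k : ℝ)) + 1) / 2 = s + k by rw [hs]; ring,
    show -(μ + (ν + 2 * (k : ℝ)) + 1) / 2 = -s + -k by rw [hs]; ring]
  have hs0 : 0 < s := by rw [hs]; linarith
  rw [Real.Gamma_add_nat_eq_poch_mul (fun j => by linarith [(by positivity : (0 : ℝ) ≤ j)]) k,
    show ν + (k : ℝ) + 1 = (ν + 1) + k by ring,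
    Real.Gamma_add_nat_eq_poch_mul (fun j => by linarith [(by positivity : (0 : ℝ) ≤ j)]) k,
    Real.rpow_add (by positivity), Real.rpow_mul (by positivity), Real.rpow_two, Real.rpow_natCast,
    Real.rpow_add hα, Real.rpow_neg hα.le, Real.rpow_neg hα.le, Real.rpow_natCast,
    Real.rpow_add_one two_ne_zero, Real.div_rpow hβ.le zero_le_two, hyp1F1Term]
  simp only [div_pow, mul_pow]
  have hΓ : 0 < Real.Gamma (ν + 1) := Real.Gamma_pos_of_pos (by linarith)
  have hpoch := poch_pos (by linarith : 0 < ν + 1) k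
  have hk! : (0 : ℝ) < k.factorial := by positivity
  have h2 : (0 : ℝ) < 2 ^ ν := by positivity
  have hαs : 0 < α ^ s := by positivity
  field_simp
  ring

theorem integral_rpow_mul_exp_neg_mul_sq_mul_besselSeries (w : ℝ) (hα : 0 < α) (hβ : 0 < β)
    (hν : -1 < ν) (h : -1 < μ + ν) :
    ∫ x in Set.Ioi (0 : ℝ), x ^ μ * Real.exp (-α * x ^ 2) * ∑' k, besselSeriesTerm w ν k (β * x) =
      β ^ ν * Real.Gamma ((μ + ν + 1) / 2) /
          (2 ^ (ν + 1) * α ^ ((μ + ν + 1) / 2) * Real.Gamma (ν + 1)) *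
        hyp1F1 ((μ + ν + 1) / 2) (ν + 1) (w * β ^ 2 / (4 * α)) := by
  set F := fun (k : ℕ) (x : ℝ) => x ^ μ * Real.exp (-α * x ^ 2) * besselSeriesTerm w ν k (β * x)
  have hnorm : ∀ k, ∫ x in Set.Ioi (0 : ℝ), ‖F k x‖ =
      ∫ x in Set.Ioi (0 : ℝ), x ^ μ * Real.exp (-α * x ^ 2) * besselSeriesTerm |w| ν k (β * x) :=
    fun k => setIntegral_congr_fun measurableSet_Ioi fun x (hx : 0 < x) => by
      rw [Real.norm_eq_abs, abs_mul, abs_mul, abs_besselSeriesTerm hν (by positivity),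
        abs_of_nonneg (Real.rpow_nonneg hx.le μ), Real.abs_exp]
  have hsummable : Summable fun k => ∫ x in Set.Ioi (0 : ℝ), ‖F k x‖ := by
    simp_rw [hnorm, integral_rpow_mul_exp_neg_mul_sq_mul_besselSeriesTerm hα hβ hν h]
    exact (summable_hyp1F1Term (by linarith) (by linarith) _).mul_left _
  calc ∫ x in Set.Ioi (0 : ℝ), x ^ μ * Real.exp (-α * x ^ 2) * ∑' k, besselSeriesTerm w ν k (β * x)
      = ∫ x in Set.Ioi (0 : ℝ), ∑' k, F k x := by simp_rw [F, tsum_mul_left]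
    _ = ∑' k, ∫ x in Set.Ioi (0 : ℝ), F k x :=
      (integral_tsum_of_summable_integral_norm
        (integrableOn_rpow_mul_exp_neg_mul_sq_mul_besselSeriesTerm hα hβ h) hsummable).symm
    _ = _ := by
      simp_rw [F, integral_rpow_mul_exp_neg_mul_sq_mul_besselSeriesTerm hα hβ hν h]
      rw [tsum_mul_left, hyp1F1]
      rfl

end BesselSeries

theorem stmt5 (μ ν α β : ℝ) (h : -1 < μ + ν) (hα : 0 < α) (hβ : 0 < β) (hν : 0 ≤ ν) :
    (∫ x in Set.Ioi (0 : ℝ), x ^ μ * Real.exp (-α * x ^ 2) * besselJ ν (β * x)) =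
      β ^ ν * Real.Gamma ((μ + ν + 1) / 2) /
        (2 ^ (ν + 1) * α ^ ((μ + ν + 1) / 2) * Real.Gamma (ν + 1)) *
        hyp1F1 ((μ + ν + 1) / 2) (ν + 1) (-β ^ 2 / (4 * α)) := by
  simp_rw [besselJ_eq_tsum_besselSeriesTerm]
  rw [show -β ^ 2 / (4 * α) = -1 * β ^ 2 / (4 * α) by ring]
  exact integral_rpow_mul_exp_neg_mul_sq_mul_besselSeries (-1) hα hβ (by linarith) h
end

section
/- Let Y have density f(y) = 2 g(‖y‖²) π(y) on ℝⁿ, where g(‖y‖²) is a spherically symmetric probability density with characteristic function ψ(‖t‖²) > 0 and π is a measurable skewing function with 0 ≤ π(y) ≤ 1 and π(-y) + π(y) = 1. Then the characteristic function of Y equals c(t) = 2 ψ(‖t‖²) k(t) where k(t) = (1/ψ(‖t‖²)) ∫_{ℝⁿ} e^{i⟨t,y⟩} g(‖y‖²) π(y) dy, and k satisfies k(t) + k(-t) = 1 for all t ∈ ℝⁿ. -/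
open MeasureTheory Real Complex Finset
open scoped RealInnerProductSpace

/-! Since `π(y) + π(-y) = 1` and `g(‖y‖²)` is even, the substitution `y ↦ -y` turns the
skewed transform at `-t` into the transform at `t` against `π(-y)`; adding the two recovers
`∫ e^{i⟨t,y⟩} g(‖y‖²) dy = ψ(‖t‖²)`, which gives `k(t) + k(-t) = 1`. The factorisation
`c = 2ψk` is just the definition of `k`, as `ψ` does not vanish. -/

section SkewedFourier

variable {E : Type*} [NormedAddCommGroup E] [InnerProductSpace ℝ E] [MeasurableSpace E]
  [BorelSpace E] {μ : Measure E}

lemma integrable_exp_inner_mul_mul_of_abs_le_one {h : E → ℂ} {p : E → ℝ}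
    (hh : Integrable h μ) (hp : AEStronglyMeasurable p μ) (hp1 : ∀ y, |p y| ≤ 1) (t : E) :
    Integrable (fun y => exp (⟪t, y⟫ * I) * h y * p y) μ := by
  have hexp : Continuous fun y : E => exp (⟪t, y⟫ * I) := by fun_prop
  refine (hh.bdd_mul hexp.aestronglyMeasurable (c := 1) ?_).mul_bdd
    (continuous_ofReal.comp_aestronglyMeasurable hp) (c := 1) ?_
  · exact .of_forall fun y => (norm_exp_ofReal_mul_I _).le
  · exact .of_forall fun y => by rw [norm_real, Real.norm_eq_abs]; exact hp1 y

variable [μ.IsNegInvariant]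

lemma integral_exp_inner_neg_mul_mul {h : E → ℂ} (heven : ∀ y, h (-y) = h y) (p : E → ℝ)
    (t : E) :
    ∫ y, exp (⟪-t, y⟫ * I) * h y * p y ∂μ = ∫ y, exp (⟪t, y⟫ * I) * h y * p (-y) ∂μ := by
  rw [← integral_neg_eq_self]
  simp only [inner_neg_neg, heven]

lemma integral_exp_inner_mul_mul_add_neg {h : E → ℂ} (hh : Integrable h μ)
    (heven : ∀ y, h (-y) = h y) {p : E → ℝ} (hp : Measurable p) (hp0 : ∀ y, 0 ≤ p y)
    (hskew : ∀ y, p (-y) + p y = 1) (t : E) :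
    ∫ y, exp (⟪t, y⟫ * I) * h y * p y ∂μ + ∫ y, exp (⟪-t, y⟫ * I) * h y * p y ∂μ =
      ∫ y, exp (⟪t, y⟫ * I) * h y ∂μ := by
  have hp1 : ∀ y, |p y| ≤ 1 := fun y =>
    abs_le.2 ⟨by linarith [hp0 y], by linarith [hp0 (-y), hskew y]⟩
  rw [integral_exp_inner_neg_mul_mul heven, ← integral_add
    (integrable_exp_inner_mul_mul_of_abs_le_one hh hp.aestronglyMeasurable hp1 t)
    (integrable_exp_inner_mul_mul_of_abs_le_one (p := fun y => p (-y)) hh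
      (hp.comp measurable_neg).aestronglyMeasurable (fun y => hp1 (-y)) t)]
  congr with y
  rw [← mul_add, ← ofReal_add, add_comm, hskew, ofReal_one, mul_one]

end SkewedFourier

theorem stmt13_general {n : ℕ} (g : ℝ → ℝ)
    (hgi : Integrable (fun x : EuclideanSpace ℝ (Fin n) => g (‖x‖ ^ 2)))
    (ψ : ℝ → ℝ)
    (hψ : ∀ t : EuclideanSpace ℝ (Fin n),
      (∫ x : EuclideanSpace ℝ (Fin n), Complex.exp ((⟪t, x⟫ : ℝ) * Complex.I) * (g (‖x‖ ^ 2) : ℂ)) =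
        ((ψ (‖t‖ ^ 2) : ℝ) : ℂ))
    (hψpos : ∀ t : EuclideanSpace ℝ (Fin n), 0 < ψ (‖t‖ ^ 2))
    (πs : EuclideanSpace ℝ (Fin n) → ℝ) (hπmeas : Measurable πs)
    (hπ01 : ∀ y, 0 ≤ πs y ∧ πs y ≤ 1) (hπskew : ∀ y, πs (-y) + πs y = 1)
    (k : EuclideanSpace ℝ (Fin n) → ℂ)
    (hk : ∀ t, k t = (1 / (ψ (‖t‖ ^ 2) : ℂ)) *
      ∫ y : EuclideanSpace ℝ (Fin n),
        Complex.exp ((⟪t, y⟫ : ℝ) * Complex.I) * (g (‖y‖ ^ 2) : ℂ) * (πs y : ℂ))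
    (t : EuclideanSpace ℝ (Fin n)) :
    (∫ y : EuclideanSpace ℝ (Fin n),
        Complex.exp ((⟪t, y⟫ : ℝ) * Complex.I) * ((2 * g (‖y‖ ^ 2) * πs y : ℝ) : ℂ)) =
      2 * ((ψ (‖t‖ ^ 2) : ℝ) : ℂ) * k t ∧ k t + k (-t) = 1 := by
  have hψ0 : ((ψ (‖t‖ ^ 2) : ℝ) : ℂ) ≠ 0 := ofReal_ne_zero.2 (hψpos t).ne'
  have hgc : Integrable fun y : EuclideanSpace ℝ (Fin n) => (g (‖y‖ ^ 2) : ℂ) := hgi.ofReal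
  constructor
  · calc _ = ∫ y : EuclideanSpace ℝ (Fin n),
          2 * (exp (⟪t, y⟫ * I) * (g (‖y‖ ^ 2) : ℂ) * (πs y : ℂ)) := by
          congr with y
          push_cast
          ring
      _ = _ := by
          rw [integral_const_mul, hk t, ← mul_assoc, mul_assoc 2, mul_one_div_cancel hψ0, mul_one]
  · rw [hk t, hk (-t), norm_neg, ← mul_add,
      integral_exp_inner_mul_mul_add_neg hgc (fun y => by rw [norm_neg]) hπmeas
        (fun y => (hπ01 y).1) hπskew, hψ t, one_div_mul_cancel hψ0]

theorem stmt13 {n : ℕ} (g : ℝ → ℝ) (hg0 : ∀ u, 0 ≤ u → 0 ≤ g u)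
    (hgmeas : Measurable g)
    (hgi : Integrable (fun x : EuclideanSpace ℝ (Fin n) => g (‖x‖ ^ 2)))
    (hgdens : (∫ x : EuclideanSpace ℝ (Fin n), g (‖x‖ ^ 2)) = 1)
    (ψ : ℝ → ℝ)
    (hψ : ∀ t : EuclideanSpace ℝ (Fin n),
      (∫ x : EuclideanSpace ℝ (Fin n), Complex.exp ((⟪t, x⟫ : ℝ) * Complex.I) * (g (‖x‖ ^ 2) : ℂ)) =
        ((ψ (‖t‖ ^ 2) : ℝ) : ℂ))
    (hψpos : ∀ t : EuclideanSpace ℝ (Fin n), 0 < ψ (‖t‖ ^ 2))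
    (πs : EuclideanSpace ℝ (Fin n) → ℝ) (hπmeas : Measurable πs)
    (hπ01 : ∀ y, 0 ≤ πs y ∧ πs y ≤ 1) (hπskew : ∀ y, πs (-y) + πs y = 1)
    (k : EuclideanSpace ℝ (Fin n) → ℂ)
    (hk : ∀ t, k t = (1 / (ψ (‖t‖ ^ 2) : ℂ)) *
      ∫ y : EuclideanSpace ℝ (Fin n),
        Complex.exp ((⟪t, y⟫ : ℝ) * Complex.I) * (g (‖y‖ ^ 2) : ℂ) * (πs y : ℂ))
    (t : EuclideanSpace ℝ (Fin n)) :
    (∫ y : EuclideanSpace ℝ (Fin n),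
        Complex.exp ((⟪t, y⟫ : ℝ) * Complex.I) * ((2 * g (‖y‖ ^ 2) * πs y : ℝ) : ℂ)) =
      2 * ((ψ (‖t‖ ^ 2) : ℝ) : ℂ) * k t ∧ k t + k (-t) = 1 :=
  stmt13_general g hgi ψ hψ hψpos πs hπmeas hπ01 hπskew k hk t
end
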